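/- arXiv:1808.06969 — 4 statements merged into one kernel-verified Lean document; each statement's English description precedes it below -/
import Mathlib

section
/- Let δ1, δ3, δ4, τ, p be real numbers with 0 < δ1 < 1/25, 0 < δ3 < 1/100, δ4 > 0, τ > 0 and |p − 1| < δ3. Set k = 100δ4 + 13/τ and d = δ4/k, and define a = (p³/18)·((3 + d)^(3/2) + 9d), b = (1 − d)·(1 − δ1)² and c = 2δ1·(1 + d). If x : ℝ → ℝ satisfies x(0) = 0 and x'(t) = k·(−a + b·(p − x(t)) − c·x(t)) for all t ≥ 0, then x(τ/2) > 3/5. -/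
/-!
Eliminating the parameters, the equation reads `x' = K (X - x)` with rate `K = k (b + c)` and
equilibrium `X = (b p - a) / (b + c)`, so `x t = X (1 - exp (-K t))`. For `d ≤ 1/100`,
`δ1 < 1/25` and `|p - 1| < 1/100` the equilibrium is at least `61/100`, while `k τ ≥ 13` and
`b + c > 0.9` give `K τ / 2 ≥ 5`; since `exp 5 > 61`, this leaves `x (τ/2) > 61/100 - 1/100`.
-/

open Real

theorem eq_add_sub_mul_exp_of_hasDerivAt {x : ℝ → ℝ} {K X : ℝ}
    (hx : ∀ t, 0 ≤ t → HasDerivAt x (K * (X - x t)) t) {t : ℝ} (ht : 0 ≤ t) :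
    x t = X + (x 0 - X) * exp (-(K * t)) := by
  set g : ℝ → ℝ := fun s => (x s - X) * exp (K * s)
  have hg : ∀ s, 0 ≤ s → HasDerivAt g 0 s := by
    intro s hs
    refine (((hx s hs).sub_const X).mul ((hasDerivAt_id s).const_mul K).exp).congr_deriv ?_
    simp only [id, mul_one]
    ring
  have hconst : g t = g 0 := constant_of_has_deriv_right_zero
    (fun s hs => (hg s hs.1).continuousAt.continuousWithinAt)
    (fun s hs => (hg s hs.1).hasDerivWithinAt) t ⟨ht, le_rfl⟩
  simp only [g, mul_zero, exp_zero, mul_one] at hconst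
  rw [← hconst, mul_assoc, ← exp_add, add_neg_cancel, exp_zero, mul_one, add_sub_cancel]

theorem rpow_three_halves_le {y M : ℝ} (hy : 0 ≤ y) (hM : 0 ≤ M) (h : y ^ 3 ≤ M ^ 2) :
    y ^ ((3 : ℝ) / 2) ≤ M := by
  have hsq : (y ^ ((3 : ℝ) / 2)) ^ 2 = y ^ 3 := by
    rw [← rpow_natCast _ 2, ← rpow_mul hy]
    norm_num
  rw [← pow_le_pow_iff_left₀ (by positivity) hM two_ne_zero, hsq]
  exact h

theorem lt_exp_five : (61 : ℝ) < exp 5 := by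
  have h5 : exp 5 = exp 1 ^ 5 := by
    rw [← exp_nat_mul]
    norm_num
  rw [h5]
  calc (61 : ℝ) < 2.7 ^ 5 := by norm_num
    _ ≤ exp 1 ^ 5 := pow_le_pow_left₀ (by norm_num) (by linarith [exp_one_gt_d9]) 5

theorem div_hundred_mul_add_le {δ e : ℝ} (hδ : 0 ≤ δ) (he : 0 < e) :
    δ / (100 * δ + e) ≤ 1 / 100 := by
  rw [div_le_iff₀ (by positivity)]
  linarith

theorem le_add_div_mul {A B τ : ℝ} (hA : 0 ≤ A) (hτ : 0 < τ) : B ≤ (A + B / τ) * τ := by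
  rw [add_mul, div_mul_cancel₀ _ hτ.ne']
  linarith [mul_nonneg hA hτ.le]

section Coefficients

variable {δ1 d p : ℝ}

theorem nand_a_le (hd0 : 0 ≤ d) (hd1 : d ≤ 1 / 100) (hp : 0 ≤ p) :
    p ^ 3 / 18 * ((3 + d) ^ ((3 : ℝ) / 2) + 9 * d) ≤ p ^ 3 * (5.32 / 18) := by
  have hpow : (3 + d) ^ ((3 : ℝ) / 2) ≤ 5.23 :=
    rpow_three_halves_le (by linarith) (by norm_num) (by nlinarith [mul_nonneg hd0 hd0])
  nlinarith [pow_nonneg hp 3]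

theorem nand_b_mem (hd0 : 0 ≤ d) (hd1 : d ≤ 1 / 100) (hδ1 : 0 < δ1) (hδ1' : δ1 < 1 / 25) :
    0.912384 ≤ (1 - d) * (1 - δ1) ^ 2 ∧ (1 - d) * (1 - δ1) ^ 2 ≤ 1 := by
  constructor <;> nlinarith [mul_pos hδ1 hδ1]

theorem nand_c_mem (hd0 : 0 ≤ d) (hd1 : d ≤ 1 / 100) (hδ1 : 0 < δ1) (hδ1' : δ1 < 1 / 25) :
    0 ≤ 2 * δ1 * (1 + d) ∧ 2 * δ1 * (1 + d) ≤ 0.0808 := by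
  constructor <;> nlinarith

end Coefficients

theorem equilibrium_lower_bound {a b c p : ℝ} (hp1 : 99 / 100 ≤ p) (hp2 : p ≤ 101 / 100)
    (ha : a ≤ p ^ 3 * (5.32 / 18)) (hb : 0.912384 ≤ b) (hc : c ≤ 0.0808) :
    61 / 100 * (b + c) ≤ b * p - a := by
  nlinarith [mul_le_mul_of_nonneg_right hb (by linarith : (0 : ℝ) ≤ p - 61 / 100),
    mul_nonneg (mul_nonneg (sub_nonneg.mpr hp1) (sub_nonneg.mpr hp2)) (sub_nonneg.mpr hp1)]

theorem stmt_2_general (δ1 δ3 δ4 τ p k d a b c : ℝ)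
    (hδ1 : 0 < δ1) (hδ1' : δ1 < 1/25)
    (hδ3' : δ3 < 1/100)
    (hδ4 : 0 < δ4) (hτ : 0 < τ)
    (hp : |p - 1| < δ3)
    (hk : k = 100 * δ4 + 13 / τ)
    (hd : d = δ4 / k)
    (ha : a = (p^3 / 18) * ((3 + d) ^ ((3:ℝ)/2) + 9 * d))
    (hb : b = (1 - d) * (1 - δ1)^2)
    (hc : c = 2 * δ1 * (1 + d))
    (x : ℝ → ℝ)
    (hx0 : x 0 = 0)
    (hode : ∀ t : ℝ, 0 ≤ t →
      HasDerivAt x (k * (-a + b * (p - x t) - c * x t)) t) :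
    x (τ / 2) > 3/5 := by
  have hk0 : 0 < k := by rw [hk]; positivity
  have hd0 : 0 ≤ d := by rw [hd]; positivity
  have hd1 : d ≤ 1 / 100 := hd ▸ hk ▸ div_hundred_mul_add_le hδ4.le (by positivity)
  obtain ⟨hp1, hp2⟩ := abs_lt.mp hp
  obtain ⟨hb1, -⟩ := hb ▸ nand_b_mem hd0 hd1 hδ1 hδ1'
  obtain ⟨hc0, hc1⟩ := hc ▸ nand_c_mem hd0 hd1 hδ1 hδ1'
  have ha' : a ≤ p ^ 3 * (5.32 / 18) := ha ▸ nand_a_le hd0 hd1 (by linarith)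
  have hbc : 0 < b + c := by linarith
  set X := (b * p - a) / (b + c)
  have hX : 61 / 100 ≤ X := (le_div_iff₀ hbc).2 <|
    equilibrium_lower_bound (by linarith) (by linarith) ha' hb1 hc1
  have hkτ : 13 ≤ k * τ := hk ▸ le_add_div_mul (by positivity) hτ
  have hrate : 5 ≤ k * (b + c) * (τ / 2) := by nlinarith [mul_pos hk0 hτ]
  have hsol := eq_add_sub_mul_exp_of_hasDerivAt (K := k * (b + c)) (X := X)
    (fun t ht => (hode t ht).congr_deriv (by simp only [X]; field_simp; ring))
    (by positivity : 0 ≤ τ / 2)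
  have hE : exp (-(k * (b + c) * (τ / 2))) < 1 / 61 :=
    calc _ ≤ exp (-5) := exp_le_exp.2 (by linarith)
      _ = (exp 5)⁻¹ := exp_neg 5
      _ < 1 / 61 := by rw [one_div]; exact inv_strictAnti₀ (by norm_num) lt_exp_five
  rw [hsol, hx0]
  nlinarith [mul_nonneg (sub_nonneg.2 hX) (by linarith : 0 ≤ 1 - exp (-(k * (b + c) * (τ / 2))))]

/-- Lemma 3.2 of the paper (x goes to 3/5). -/
theorem stmt_2 (δ1 δ3 δ4 τ p k d a b c : ℝ)
    (hδ1 : 0 < δ1) (hδ1' : δ1 < 1/25)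
    (hδ3 : 0 < δ3) (hδ3' : δ3 < 1/100)
    (hδ4 : 0 < δ4) (hτ : 0 < τ)
    (hp : |p - 1| < δ3)
    (hk : k = 100 * δ4 + 13 / τ)
    (hd : d = δ4 / k)
    (ha : a = (p^3 / 18) * ((3 + d) ^ ((3:ℝ)/2) + 9 * d))
    (hb : b = (1 - d) * (1 - δ1)^2)
    (hc : c = 2 * δ1 * (1 + d))
    (x : ℝ → ℝ)
    (hx0 : x 0 = 0)
    (hode : ∀ t : ℝ, 0 ≤ t →
      HasDerivAt x (k * (-a + b * (p - x t) - c * x t)) t) :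
    x (τ / 2) > 3/5 :=
  stmt_2_general δ1 δ3 δ4 τ p k d a b c hδ1 hδ1' hδ3' hδ4 hτ hp hk hd ha hb hc x hx0 hode
end

section
/- Let δ1, d, p, k, τ be real numbers with 0 < δ1 < 1/25, 0 ≤ d ≤ 1/100, |p − 1| < 1/100, τ > 0 and k > 13/τ. Define a = (p³/18)·((3 + d)^(3/2) + 9d), b = (1 − d)·(1 − δ1)² and c = 2δ1·(1 + d). If x : ℝ → ℝ is differentiable with x(0) ≥ 0 and x'(t) ≥ k·(−a + b·(p − x(t)) − c·x(t)) for all t ∈ [0, τ/2], then x(τ/2) > 3/5. -/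
set_option maxHeartbeats 1000000 in
/-- comparison (differential inequality) form of Lemma 3.2. -/
theorem stmt_3 (δ1 d p k τ a b c : ℝ)
    (hδ1 : 0 < δ1) (hδ1' : δ1 < 1/25)
    (hd : 0 ≤ d) (hd' : d ≤ 1/100)
    (hp : |p - 1| < 1/100)
    (hτ : 0 < τ) (hk : k > 13 / τ)
    (ha : a = (p^3 / 18) * ((3 + d) ^ ((3:ℝ)/2) + 9 * d))
    (hb : b = (1 - d) * (1 - δ1)^2)
    (hc : c = 2 * δ1 * (1 + d))
    (x : ℝ → ℝ)
    (hdiff : Differentiable ℝ x)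
    (hx0 : 0 ≤ x 0)
    (hineq : ∀ t ∈ Set.Icc (0:ℝ) (τ / 2),
      deriv x t ≥ k * (-a + b * (p - x t) - c * x t)) :
    x (τ / 2) > 3/5 := by
  obtain ⟨hp1', hp2'⟩ := abs_lt.mp hp
  have hp1 : 99/100 < p := by linarith
  have hp2 : p < 101/100 := by linarith
  -- bounds on b, c
  have hbL : 912384/1000000 < b := by rw [hb]; nlinarith
  have hbU : b < 1 := by rw [hb]; nlinarith
  have hcU : c < 808/10000 := by rw [hc]; nlinarith
  have hc0 : 0 ≤ c := by rw [hc]; nlinarith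
  -- rpow bound
  have h3d : (0:ℝ) ≤ 3 + d := by linarith
  have hs_eq : (3+d) ^ ((3:ℝ)/2) = Real.sqrt ((3+d)^3) := by
    rw [Real.sqrt_eq_rpow, ← Real.rpow_natCast (3+d) 3, ← Real.rpow_mul h3d]
    norm_num
  have hs_ub : (3+d) ^ ((3:ℝ)/2) ≤ 52222/10000 := by
    rw [hs_eq]
    rw [show (52222/10000:ℝ) = Real.sqrt ((52222/10000)^2) by
      rw [Real.sqrt_sq]; norm_num]
    apply Real.sqrt_le_sqrt
    nlinarith [pow_le_pow_left₀ h3d (show 3+d ≤ 301/100 by linarith) 3]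
  have hs_lb : (0:ℝ) ≤ (3+d) ^ ((3:ℝ)/2) := by
    rw [hs_eq]; exact Real.sqrt_nonneg _
  -- bound on a
  have hp3 : p^3 < 1030301/1000000 := by
    nlinarith [pow_lt_pow_left₀ hp2 (by linarith : (0:ℝ) ≤ p) (by norm_num : 3 ≠ 0)]
  have hp3' : (0:ℝ) < p^3 := by positivity
  have haU : a < 30407/100000 := by
    have hS : (3+d) ^ ((3:ℝ)/2) + 9*d ≤ 53122/10000 := by linarith
    have hS0 : (0:ℝ) ≤ (3+d) ^ ((3:ℝ)/2) + 9*d := by linarith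
    have hkey : p^3 * ((3+d) ^ ((3:ℝ)/2) + 9*d) ≤ 1030301/1000000 * (53122/10000) :=
      mul_le_mul hp3.le hS hS0 (by norm_num)
    calc a = p^3 * ((3+d) ^ ((3:ℝ)/2) + 9*d) / 18 := by rw [ha]; ring
      _ ≤ 1030301/1000000 * (53122/10000) / 18 := by linarith
      _ < 30407/100000 := by norm_num
  set L := b + c with hLdef
  set M := -a + b * p with hMdef
  have hL_pos : 0 < L := by simp only [hLdef]; linarith
  have hLlb : 912384/1000000 < L := by simp only [hLdef]; linarith
  have hM_lb : 99/100 * b - 30407/100000 < M := by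
    simp only [hMdef]
    nlinarith [mul_pos (show (0:ℝ) < b by linarith) (show (0:ℝ) < p - 99/100 by linarith)]
  obtain ⟨xs, hxsdef⟩ : ∃ xs : ℝ, xs = M / L := ⟨_, rfl⟩
  have hxs : 6032/10000 < xs := by
    rw [hxsdef, lt_div_iff₀ hL_pos]
    simp only [hLdef]
    nlinarith [hM_lb, hbL, hcU]
  have hk0 : 0 < k := lt_trans (div_pos (by norm_num) hτ) hk
  have hkτ : 13 < k * τ := by
    rw [gt_iff_lt, div_lt_iff₀ hτ] at hk; exact hk
  have hkL : 0 < k * L := mul_pos hk0 hL_pos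
  -- the auxiliary function
  set g : ℝ → ℝ := fun t => (x t - xs) * Real.exp (k * L * t) with hg
  have hgderiv : ∀ t, HasDerivAt g
      ((deriv x t) * Real.exp (k*L*t) + (x t - xs) * (k*L*Real.exp (k*L*t))) t := by
    intro t
    have h1 : HasDerivAt x (deriv x t) t := (hdiff t).hasDerivAt
    have hlin : HasDerivAt (fun s : ℝ => k*L*s) (k*L) t := by
      simpa using (hasDerivAt_id t).const_mul (k*L)
    have h2 : HasDerivAt (fun s : ℝ => Real.exp (k*L*s)) (k*L*Real.exp (k*L*t)) t := by
      simpa [mul_comm] using hlin.exp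
    exact (h1.sub_const xs).mul h2
  have hmono : MonotoneOn g (Set.Icc 0 (τ/2)) := by
    apply monotoneOn_of_deriv_nonneg (convex_Icc _ _)
    · exact fun t _ => ((hgderiv t).differentiableAt).continuousAt.continuousWithinAt
    · exact fun t _ => ((hgderiv t).differentiableAt).differentiableWithinAt
    · intro t ht
      rw [interior_Icc] at ht
      rw [(hgderiv t).deriv]
      have hiq := hineq t ⟨le_of_lt ht.1, le_of_lt ht.2⟩
      have hrw : k * (-a + b * (p - x t) - c * x t) = k*L*xs - k*L*(x t) := by
        have hLM : L * xs = M := by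
          rw [hxsdef]; field_simp
        simp only [hMdef, hLdef] at hLM ⊢
        linear_combination (-k) * hLM
      have hEpos : 0 < Real.exp (k*L*t) := Real.exp_pos _
      have h6 : 0 ≤ (deriv x t + k*L*(x t - xs)) * Real.exp (k*L*t) :=
        mul_nonneg (by linarith [hiq, hrw]) hEpos.le
      nlinarith [h6]
  have hTmem : (τ/2) ∈ Set.Icc (0:ℝ) (τ/2) := by
    constructor <;> linarith
  have hkey : g 0 ≤ g (τ/2) := hmono ⟨le_refl 0, by linarith⟩ hTmem (by linarith)
  have hkey' : x 0 - xs ≤ (x (τ/2) - xs) * Real.exp (k*L*(τ/2)) := by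
    have : g 0 = x 0 - xs := by simp [hg]
    rw [this] at hkey; exact hkey
  -- exponential lower bound
  have hEarg : (593/100:ℝ) ≤ k*L*(τ/2) := by
    nlinarith [mul_pos (sub_pos.mpr hkτ) (sub_pos.mpr hLlb),
      mul_pos hk0 hτ]
  have hE : (286:ℝ) < Real.exp (k*L*(τ/2)) := by
    have h1 : Real.exp (593/100) ≤ Real.exp (k*L*(τ/2)) := Real.exp_le_exp.mpr hEarg
    have e1 : (2.7182:ℝ) < Real.exp 1 := by
      have := Real.exp_one_gt_d9; norm_num at this ⊢; linarith
    have e2 : Real.exp (593/100) = (Real.exp 1)^5 * Real.exp (93/100) := by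
      rw [← Real.exp_nat_mul, ← Real.exp_add]; norm_num
    have e3 : (193/100:ℝ) ≤ Real.exp (93/100) := by
      have := Real.add_one_le_exp (93/100:ℝ); linarith
    have e4 : (2.7182:ℝ)^5 < (Real.exp 1)^5 := by
      exact pow_lt_pow_left₀ e1 (by norm_num) (by norm_num)
    have e5 : (286:ℝ) < Real.exp (593/100) := by
      rw [e2]
      nlinarith [Real.exp_pos (93/100:ℝ)]
    linarith
  -- conclusion
  by_contra hcon
  push_neg at hcon
  have hneg : x (τ/2) - xs ≤ 3/5 - xs := by linarith
  have hneg' : x (τ/2) - xs < 0 := by linarith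
  have hstep : (x (τ/2) - xs) * Real.exp (k*L*(τ/2)) ≤ (x (τ/2) - xs) * 286 := by
    apply mul_le_mul_of_nonpos_left (le_of_lt hE) (le_of_lt hneg')
  linarith [hkey', hstep, hx0, hxs]
end

section
/- Let p ≥ 0 and 0 ≤ d ≤ 1 be real numbers. Then for all real y, ȳ ≥ 0 with y + ȳ = p, the inequality 3·(1 − d)·ȳ²·y − 3·(1 + d)·ȳ·y² ≥ −(p³/18)·((3 + d)^(3/2) + 9d) holds. -/
/-- pointwise lower bound from the proof of Lemma 3.4. -/
theorem stmt_6 (p d : ℝ) (hp : 0 ≤ p) (hd0 : 0 ≤ d) (hd1 : d ≤ 1) :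
    ∀ y ybar : ℝ, 0 ≤ y → 0 ≤ ybar → y + ybar = p →
      3 * (1 - d) * ybar^2 * y - 3 * (1 + d) * ybar * y^2 ≥
        -(p^3 / 18) * ((3 + d) ^ ((3:ℝ)/2) + 9 * d) := by
  intro y ybar hy hyb hsum
  set s := Real.sqrt (3 + d) with hs
  set q := Real.sqrt (d^2 + 3) with hq
  have hs0 : 0 ≤ s := Real.sqrt_nonneg _
  have hq0 : 0 ≤ q := Real.sqrt_nonneg _
  have hs2 : s ^ 2 = 3 + d := Real.sq_sqrt (by linarith)
  have hq2 : q ^ 2 = d ^ 2 + 3 := Real.sq_sqrt (by positivity)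
  have hqs : q ≤ s := by
    rw [hs, hq]
    exact Real.sqrt_le_sqrt (by nlinarith)
  have hcube : q ^ 3 ≤ s ^ 3 := pow_le_pow_left₀ hq0 hqs 3
  have h1 : (3 + d) ^ ((3:ℝ)/2) = s ^ 3 := by
    rw [hs, Real.sqrt_eq_rpow, ← Real.rpow_natCast ((3+d) ^ ((1:ℝ)/2)) 3,
      ← Real.rpow_mul (by linarith)]
    norm_num
  rw [h1]
  subst hsum
  -- a + 2q ≥ 6 where a = 3 + d
  have hq6 : 3 - d ≤ 2 * q := by nlinarith [sq_nonneg (2*q - (3 - d)), sq_nonneg (d+1)]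
  have hfac : 0 ≤ (3 + d + 2*q) * (y + ybar) - 6 * ybar := by nlinarith
  have hA : 0 ≤ (6*ybar - (3 + d - q)*(y + ybar))^2 * ((3 + d + 2*q) * (y + ybar) - 6 * ybar) :=
    mul_nonneg (sq_nonneg _) hfac
  -- reduce q^2 using hq2
  have hA' : 0 ≤ -(6*ybar - (3+d)*(y+ybar))^3
      + 3*(6*ybar - (3+d)*(y+ybar))*(d^2+3)*(y+ybar)^2 + 2*q^3*(y+ybar)^3 := by
    have e : (6*ybar - (3 + d - q)*(y + ybar))^2 * ((3 + d + 2*q) * (y + ybar) - 6 * ybar)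
        = -(6*ybar - (3+d)*(y+ybar))^3
          + 3*(6*ybar - (3+d)*(y+ybar))*(d^2+3)*(y+ybar)^2 + 2*q^3*(y+ybar)^3 := by
      linear_combination (3*(6*ybar - (3+d)*(y+ybar))*(y+ybar)^2) * hq2
    linarith [e ▸ hA]
  have hp3 : 0 ≤ (y + ybar)^3 := by positivity
  nlinarith [hA', mul_nonneg hp3 (sub_nonneg.2 hcube),
    mul_nonneg hp3 (pow_nonneg hd0 3)]
end

section
/- For every real number d with 0 ≤ d ≤ 1, the inequality 3·√(d² + 3) + d·(d·(√(d² + 3) − d) + 9) ≤ (3 + d)^(3/2) + 9d holds. -/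
/-- algebraic inequality from the proof of Lemma 3.4. -/
theorem stmt_7 (d : ℝ) (hd0 : 0 ≤ d) (hd1 : d ≤ 1) :
    3 * Real.sqrt (d^2 + 3) + d * (d * (Real.sqrt (d^2 + 3) - d) + 9) ≤
      (3 + d) ^ ((3:ℝ)/2) + 9 * d := by
  have h3 : (0:ℝ) ≤ 3 + d := by linarith
  have hb : (3+d)^((3:ℝ)/2) = Real.sqrt (3+d) ^ 3 := by
    rw [Real.sqrt_eq_rpow, ← Real.rpow_natCast ((3+d) ^ ((1:ℝ)/2)) 3,
      ← Real.rpow_mul h3]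
    norm_num
  have ha : Real.sqrt (d^2+3) ≤ Real.sqrt (3+d) :=
    Real.sqrt_le_sqrt (by nlinarith)
  have ha2 : Real.sqrt (d^2+3) ^ 2 = d^2+3 := Real.sq_sqrt (by positivity)
  have hb2 : Real.sqrt (3+d) ^ 2 = 3+d := Real.sq_sqrt h3
  have ha0 : 0 ≤ Real.sqrt (d^2+3) := Real.sqrt_nonneg _
  have hb0 : 0 ≤ Real.sqrt (3+d) := Real.sqrt_nonneg _
  rw [hb]
  nlinarith [mul_le_mul_of_nonneg_left ha hb0, mul_le_mul_of_nonneg_left ha ha0,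
    pow_le_pow_left₀ ha0 ha 3, sq_nonneg d, pow_nonneg hd0 3]
end
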